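/- With the notation of the variance reduction theorem, if additionally tr(K) > 0, α > 0, and G ≠ 0 (so G has at least one positive eigenvalue), then tr(C_c) > tr(C_g) strictly. -/

import Mathlib

open Matrix Kronecker

/-- A nonnegative scalar multiple of a psd real matrix is psd. -/
lemma psd_smul_aux {n : ℕ} {P : Matrix (Fin n) (Fin n) ℝ} (hP : P.PosSemidef)
    {c : ℝ} (hc : 0 ≤ c) : (c • P).PosSemidef := by
  refine ⟨by show (c • P)ᴴ = c • P; rw [Matrix.conjTranspose_smul, star_trivial, hP.1.eq], fun x => ?_⟩
  exact (hP.smul hc).2 x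

/-- A psd real matrix that is nonzero has positive trace. -/
lemma psd_trace_pos_aux {n : ℕ} {P : Matrix (Fin n) (Fin n) ℝ} (hP : P.PosSemidef)
    (hne : P ≠ 0) : 0 < P.trace := by
  rcases hP.trace_nonneg.lt_or_eq with h | h
  · exact h
  · exact absurd (hP.trace_eq_zero_iff.mp h.symm) hne

/-- Key lemma: trace of `B*B` is strictly less than `M`. -/
lemma trace_B_sq_lt {M : ℕ} (G : Matrix (Fin M) (Fin M) ℝ) (hG : G.PosSemidef) (hGne : G ≠ 0)
    (α : ℝ) (hα : 0 < α) (B : Matrix (Fin M) (Fin M) ℝ) (hB : B = (1 + α • G)⁻¹) :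
    Matrix.trace (B * B) < Matrix.trace (1 : Matrix (Fin M) (Fin M) ℝ) := by
  set A : Matrix (Fin M) (Fin M) ℝ := 1 + α • G with hA
  have hApd : A.PosDef := Matrix.PosDef.one.add_posSemidef (psd_smul_aux hG hα.le)
  have hBpd : B.PosDef := hB ▸ hApd.inv
  have hdet : IsUnit A.det := hApd.det_pos.ne'.isUnit
  have hBA : B * A = 1 := by rw [hB]; exact Matrix.nonsing_inv_mul A hdet
  have hAB : A * B = 1 := by rw [hB]; exact Matrix.mul_nonsing_inv A hdet
  -- the matrix A*A - 1
  have hGH : Gᴴ = G := hG.1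
  have hMx : A * A - 1 = (2 * α) • G + (α ^ 2) • (G * G) := by
    rw [hA]
    simp only [Matrix.add_mul, Matrix.mul_add, Matrix.one_mul, Matrix.mul_one,
      Matrix.smul_mul, Matrix.mul_smul, smul_smul]
    module
  have hGGps : (G * G).PosSemidef := by
    have := Matrix.posSemidef_conjTranspose_mul_self G
    rwa [hGH] at this
  have hMxpsd : (A * A - 1).PosSemidef := by
    rw [hMx]
    exact (psd_smul_aux hG (by positivity)).add (psd_smul_aux hGGps (by positivity))
  have hGGne : G * G ≠ 0 := by
    intro h
    exact hGne (Matrix.conjTranspose_mul_self_eq_zero.mp (by rw [hGH]; exact h))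
  have hMxtr : 0 < (A * A - 1).trace := by
    rw [hMx, Matrix.trace_add, Matrix.trace_smul, Matrix.trace_smul]
    have h1 : 0 ≤ Matrix.trace G := by
      rcases eq_or_ne G 0 with h | h
      · simp [h]
      · exact (psd_trace_pos_aux hG h).le
    have h2 : 0 < Matrix.trace (G * G) := psd_trace_pos_aux hGGps hGGne
    have := mul_pos (pow_pos hα 2) h2
    simp only [smul_eq_mul]
    nlinarith
  have hMxne : A * A - 1 ≠ 0 := by
    intro h
    rw [h] at hMxtr
    simp at hMxtr
  -- P = B * (A*A-1) * B
  have hBH : Bᴴ = B := hBpd.isHermitian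
  have hPpsd : (B * (A * A - 1) * B).PosSemidef := by
    have := hMxpsd.conjTranspose_mul_mul_same B
    rwa [hBH] at this
  have hPeq : B * (A * A - 1) * B = 1 - B * B := by
    rw [Matrix.mul_sub, Matrix.sub_mul, Matrix.mul_one]
    rw [show B * (A * A) * B = (B * A) * (A * B) by noncomm_ring]
    rw [hBA, hAB, Matrix.one_mul]
  have hPne : B * (A * A - 1) * B ≠ 0 := by
    intro h
    apply hMxne
    have : A * (B * (A * A - 1) * B) * A = A * A - 1 := by
      rw [show A * (B * (A * A - 1) * B) * A = (A * B) * (A * A - 1) * (B * A) by noncomm_ring,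
        hAB, hBA, Matrix.one_mul, Matrix.mul_one]
    rw [h, Matrix.mul_zero, Matrix.zero_mul] at this
    exact this.symm
  have hPtr : 0 < (B * (A * A - 1) * B).trace := psd_trace_pos_aux hPpsd hPne
  rw [hPeq, Matrix.trace_sub] at hPtr
  linarith

/-- Strict variance reduction: if additionally `tr(K) > 0`, `α > 0` and
`G ≠ 0`, then `tr(C_c) > tr(C_g)` strictly. -/
theorem trace_variance_reduction_strict {M N : ℕ}
    (K : Matrix (Fin N) (Fin N) ℝ) (hK : K.PosSemidef)
    (hKtr : 0 < Matrix.trace K)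
    (G : Matrix (Fin M) (Fin M) ℝ) (hG : G.PosSemidef) (hGne : G ≠ 0)
    (α : ℝ) (hα : 0 < α) (β : ℝ) (hβ : 0 < β)
    (B : Matrix (Fin M) (Fin M) ℝ) (hB : B = (1 + α • G)⁻¹)
    (Cc Cg : Matrix (Fin M × Fin N) (Fin M × Fin N) ℝ)
    (hCc : Cc = (1 : Matrix (Fin M) (Fin M) ℝ) ⊗ₖ K + β⁻¹ • 1)
    (hCg : Cg = (B * B) ⊗ₖ K + β⁻¹ • 1) :
    Matrix.trace Cg < Matrix.trace Cc := by
  have key := trace_B_sq_lt G hG hGne α hα B hB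
  rw [hCc, hCg, Matrix.trace_add, Matrix.trace_add, Matrix.trace_kronecker,
    Matrix.trace_kronecker]
  have := mul_lt_mul_of_pos_right key hKtr
  linarith
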